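/- arXiv:1810.11445 — 2 statements merged into one kernel-verified Lean document; each statement's English description precedes it below -/
import Mathlib

section
/- Let n_L, n_H > 0 be constants, let λ : ℝ → ℝ, let c > 0, and let T_L, T_H : ℝ → ℝ be differentiable with T_L(t) ≠ 0 and λ(T_L(t))/T_L(t) ≥ c for all t ≥ 0, satisfying (3/2) n_L T_L'(t) = −3 (λ(T_L(t))/T_L(t)) n_L n_H (T_L(t) − T_H(t)) and (3/2) n_H T_H'(t) = −3 (λ(T_L(t))/T_L(t)) n_L n_H (T_H(t) − T_L(t)). Then both temperatures converge, as t → ∞, to the common equilibrium temperature T_∞ = (n_L T_L(0) + n_H T_H(0))/(n_L + n_H): T_L(t) → T_∞ and T_H(t) → T_∞. -/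
open Filter

theorem stmt_14 (nL nH : ℝ) (hnL : 0 < nL) (hnH : 0 < nH)
    (lam : ℝ → ℝ) (c : ℝ) (hc : 0 < c) (TL TH : ℝ → ℝ)
    (hTL : Differentiable ℝ TL) (hTH : Differentiable ℝ TH)
    (hTL0 : ∀ t : ℝ, 0 ≤ t → TL t ≠ 0)
    (hlam : ∀ t : ℝ, 0 ≤ t → c ≤ lam (TL t) / TL t)
    (hL : ∀ t : ℝ, 0 ≤ t → (3 / 2) * nL * deriv TL t =
      -3 * (lam (TL t) / TL t) * nL * nH * (TL t - TH t))
    (hH : ∀ t : ℝ, 0 ≤ t → (3 / 2) * nH * deriv TH t =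
      -3 * (lam (TL t) / TL t) * nL * nH * (TH t - TL t)) :
    Tendsto TL atTop (nhds ((nL * TL 0 + nH * TH 0) / (nL + nH))) ∧
    Tendsto TH atTop (nhds ((nL * TL 0 + nH * TH 0) / (nL + nH))) := by
  set g : ℝ → ℝ := fun t => lam (TL t) / TL t with hg
  set D : ℝ → ℝ := fun t => TL t - TH t with hDdef
  have hDdiff : Differentiable ℝ D := hTL.sub hTH
  have hnLH : (0:ℝ) < nL + nH := by linarith
  -- derivative formulas
  have hTL' : ∀ t : ℝ, 0 ≤ t → deriv TL t = -2 * g t * nH * D t := by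
    intro t ht
    have h1 := hL t ht
    have h2 : (3/2) * nL * deriv TL t = (3/2) * nL * (-2 * g t * nH * D t) := by
      rw [h1]; simp only [hg, hDdef]; ring
    have h3 : ((3:ℝ)/2) * nL ≠ 0 := by positivity
    exact mul_left_cancel₀ h3 h2
  have hTH' : ∀ t : ℝ, 0 ≤ t → deriv TH t = 2 * g t * nL * D t := by
    intro t ht
    have h1 := hH t ht
    have h2 : (3/2) * nH * deriv TH t = (3/2) * nH * (2 * g t * nL * D t) := by
      rw [h1]; simp only [hg, hDdef]; ring
    have h3 : ((3:ℝ)/2) * nH ≠ 0 := by positivity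
    exact mul_left_cancel₀ h3 h2
  have hD' : ∀ t : ℝ, 0 ≤ t →
      HasDerivAt D (-2 * g t * (nL + nH) * D t) t := by
    intro t ht
    have h := ((hTL t).hasDerivAt.sub (hTH t).hasDerivAt)
    have : deriv TL t - deriv TH t = -2 * g t * (nL + nH) * D t := by
      rw [hTL' t ht, hTH' t ht]; ring
    rw [this] at h
    exact h
  set k : ℝ := 2 * c * (nL + nH) with hkdef
  have hk : 0 < k := by positivity
  set φ : ℝ → ℝ := fun t => D t ^ 2 * Real.exp (2 * k * t) with hφdef
  have hexp' : ∀ t : ℝ, HasDerivAt (fun t => Real.exp (2 * k * t))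
      (Real.exp (2 * k * t) * (2 * k * 1)) t := by
    intro t
    exact ((hasDerivAt_id t).const_mul (2 * k)).exp
  have hφdiff : Differentiable ℝ φ := by
    apply (hDdiff.pow 2).mul
    exact fun t => (hexp' t).differentiableAt
  have hφ' : ∀ t : ℝ, 0 ≤ t → deriv φ t ≤ 0 := by
    intro t ht
    have h : HasDerivAt φ
        ((2 : ℕ) * D t ^ 1 * (-2 * g t * (nL + nH) * D t) * Real.exp (2 * k * t)
          + D t ^ 2 * (Real.exp (2 * k * t) * (2 * k * 1))) t :=
      ((hD' t ht).pow 2).mul (hexp' t)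
    rw [h.deriv]
    have hge : c ≤ g t := hlam t ht
    have hexp : 0 < Real.exp (2 * k * t) := Real.exp_pos _
    have hsq : 0 ≤ D t ^ 2 := sq_nonneg _
    have key : (2:ℕ) * D t ^ 1 * (-2 * g t * (nL + nH) * D t) * Real.exp (2 * k * t)
        + D t ^ 2 * (Real.exp (2 * k * t) * (2 * k * 1))
        = Real.exp (2 * k * t) * (D t ^ 2 * (2 * k - 4 * g t * (nL + nH))) := by
      push_cast; ring
    rw [key]
    have h5 : 2 * k - 4 * g t * (nL + nH) ≤ 0 := by
      rw [hkdef]; nlinarith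
    have h6 : 0 ≤ D t ^ 2 * (4 * g t * (nL + nH) - 2 * k) :=
      mul_nonneg hsq (by linarith)
    nlinarith [mul_nonneg hexp.le h6]
  have hmono : AntitoneOn φ (Set.Ici (0:ℝ)) := by
    apply antitoneOn_of_deriv_nonpos (convex_Ici 0) hφdiff.continuous.continuousOn
      hφdiff.differentiableOn
    intro x hx
    rw [interior_Ici] at hx
    exact hφ' x (le_of_lt hx)
  -- pointwise bound on |D|
  have hbound : ∀ t : ℝ, 0 ≤ t → |D t| ≤ |D 0| * Real.exp (-(k * t)) := by
    intro t ht
    have h := hmono (Set.self_mem_Ici) (Set.mem_Ici.2 ht) ht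
    have hφ0 : φ 0 = D 0 ^ 2 := by simp [hφdef]
    have hineq : D t ^ 2 * Real.exp (2 * k * t) ≤ D 0 ^ 2 := by
      rw [← hφ0]; exact h
    have hsq : D t ^ 2 ≤ (|D 0| * Real.exp (-(k * t))) ^ 2 := by
      have e1 : (|D 0| * Real.exp (-(k * t))) ^ 2 = D 0 ^ 2 / Real.exp (2 * k * t) := by
        rw [mul_pow, sq_abs, sq (Real.exp _), ← Real.exp_add,
          show -(k * t) + -(k * t) = -(2 * k * t) by ring, Real.exp_neg,
          div_eq_mul_inv]
      rw [e1, le_div_iff₀ (Real.exp_pos _)]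
      exact hineq
    calc |D t| = Real.sqrt (D t ^ 2) := (Real.sqrt_sq_eq_abs _).symm
      _ ≤ Real.sqrt ((|D 0| * Real.exp (-(k * t))) ^ 2) := Real.sqrt_le_sqrt hsq
      _ = |(|D 0| * Real.exp (-(k * t)))| := Real.sqrt_sq_eq_abs _
      _ = |D 0| * Real.exp (-(k * t)) := abs_of_nonneg (by positivity)
  -- D tends to 0
  have hDto0 : Tendsto D atTop (nhds 0) := by
    have hev : ∀ᶠ t : ℝ in atTop, ‖D t‖ ≤ |D 0| * Real.exp (-(k * t)) := by
      filter_upwards [eventually_ge_atTop (0:ℝ)] with t ht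
      simpa [Real.norm_eq_abs] using hbound t ht
    refine squeeze_zero_norm' hev ?_
    · have h1 : Tendsto (fun t : ℝ => k * t) atTop atTop :=
        Tendsto.const_mul_atTop hk tendsto_id
      have h2 : Tendsto (fun t : ℝ => Real.exp (-(k * t))) atTop (nhds 0) :=
        Real.tendsto_exp_neg_atTop_nhds_zero.comp h1
      have := h2.const_mul (|D 0|)
      simpa using this
  -- conservation law
  set ψ : ℝ → ℝ := fun t => nL * TL t + nH * TH t with hψdef
  have hψdiff : Differentiable ℝ ψ := (hTL.const_mul nL).add (hTH.const_mul nH)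
  have hψ' : ∀ t : ℝ, 0 ≤ t → deriv ψ t = 0 := by
    intro t ht
    have h : HasDerivAt ψ (nL * deriv TL t + nH * deriv TH t) t :=
      ((hTL t).hasDerivAt.const_mul nL).add ((hTH t).hasDerivAt.const_mul nH)
    rw [h.deriv, hTL' t ht, hTH' t ht]; ring
  have hψconst : ∀ t : ℝ, 0 ≤ t → ψ t = ψ 0 := by
    intro t ht
    have hanti : AntitoneOn ψ (Set.Ici (0:ℝ)) := by
      apply antitoneOn_of_deriv_nonpos (convex_Ici 0) hψdiff.continuous.continuousOn
        hψdiff.differentiableOn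
      intro x hx
      rw [interior_Ici] at hx
      rw [hψ' x (le_of_lt hx)]
    have hmono2 : MonotoneOn ψ (Set.Ici (0:ℝ)) := by
      apply monotoneOn_of_deriv_nonneg (convex_Ici 0) hψdiff.continuous.continuousOn
        hψdiff.differentiableOn
      intro x hx
      rw [interior_Ici] at hx
      rw [hψ' x (le_of_lt hx)]
    exact le_antisymm (hanti Set.self_mem_Ici (Set.mem_Ici.2 ht) ht)
      (hmono2 Set.self_mem_Ici (Set.mem_Ici.2 ht) ht)
  -- representation of TL, TH
  have hTLrep : ∀ t : ℝ, 0 ≤ t → TL t = (ψ 0 + nH * D t) / (nL + nH) := by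
    intro t ht
    have h1 := hψconst t ht
    simp only [hψdef, hDdef] at h1 ⊢
    field_simp
    linarith
  have hTHrep : ∀ t : ℝ, 0 ≤ t → TH t = (ψ 0 - nL * D t) / (nL + nH) := by
    intro t ht
    have h1 := hψconst t ht
    simp only [hψdef, hDdef] at h1 ⊢
    field_simp
    linarith
  have hψ0 : ψ 0 = nL * TL 0 + nH * TH 0 := rfl
  constructor
  · have hlim : Tendsto (fun t => (ψ 0 + nH * D t) / (nL + nH)) atTop
        (nhds ((ψ 0 + nH * 0) / (nL + nH))) :=
      (tendsto_const_nhds.add (hDto0.const_mul nH)).div_const _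
    have heq : (ψ 0 + nH * 0) / (nL + nH) = (nL * TL 0 + nH * TH 0) / (nL + nH) := by
      rw [hψ0]; ring_nf
    rw [heq] at hlim
    apply hlim.congr'
    filter_upwards [eventually_ge_atTop (0:ℝ)] with t ht
    exact (hTLrep t ht).symm
  · have hlim : Tendsto (fun t => (ψ 0 - nL * D t) / (nL + nH)) atTop
        (nhds ((ψ 0 - nL * 0) / (nL + nH))) :=
      (tendsto_const_nhds.sub (hDto0.const_mul nL)).div_const _
    have heq : (ψ 0 - nL * 0) / (nL + nH) = (nL * TL 0 + nH * TH 0) / (nL + nH) := by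
      rw [hψ0]; ring_nf
    rw [heq] at hlim
    apply hlim.congr'
    filter_upwards [eventually_ge_atTop (0:ℝ)] with t ht
    exact (hTHrep t ht).symm
end

section
/- Let n_L, n_H > 0, Δt > 0, and let (T_L^n), (T_H^n), (c^n) be real sequences with c^{n+1} ≥ 0 for all n, satisfying (3/2) n_L (T_L^{n+1} − T_L^n)/Δt = 3 c^{n+1} (T_H^{n+1} − T_L^{n+1}) and (3/2) n_H (T_H^{n+1} − T_H^n)/Δt = −3 c^{n+1} (T_H^{n+1} − T_L^{n+1}). Then the temperature difference satisfies the exact recursion T_H^{n+1} − T_L^{n+1} = (T_H^n − T_L^n) / (1 + 2 Δt c^{n+1} (1/n_L + 1/n_H)), and hence |T_H^{n+1} − T_L^{n+1}| ≤ |T_H^n − T_L^n| for every time step Δt > 0 (unconditional stability/contraction of the implicit limiting scheme). -/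
theorem stmt_16 (nL nH Δt : ℝ) (hnL : 0 < nL) (hnH : 0 < nH) (hΔt : 0 < Δt)
    (TL TH c : ℕ → ℝ) (hc : ∀ n : ℕ, 0 ≤ c (n + 1))
    (hL : ∀ n : ℕ, (3 / 2) * nL * ((TL (n + 1) - TL n) / Δt) =
      3 * c (n + 1) * (TH (n + 1) - TL (n + 1)))
    (hH : ∀ n : ℕ, (3 / 2) * nH * ((TH (n + 1) - TH n) / Δt) =
      -3 * c (n + 1) * (TH (n + 1) - TL (n + 1))) :
    ∀ n : ℕ,
      TH (n + 1) - TL (n + 1) =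
        (TH n - TL n) / (1 + 2 * Δt * c (n + 1) * (1 / nL + 1 / nH)) ∧
      |TH (n + 1) - TL (n + 1)| ≤ |TH n - TL n| := by
  intro n
  have hc' := hc n
  have hL' := hL n
  have hH' := hH n
  set d := 1 + 2 * Δt * c (n + 1) * (1 / nL + 1 / nH) with hd
  have hd1 : 1 ≤ d := by
    have : 0 ≤ 2 * Δt * c (n + 1) * (1 / nL + 1 / nH) := by positivity
    rw [hd]; linarith
  have hdpos : 0 < d := by linarith
  have key : TH (n + 1) - TL (n + 1) = (TH n - TL n) / d := by
    rw [eq_div_iff (ne_of_gt hdpos)]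
    have e1 : TL (n + 1) - TL n = Δt * (2 * c (n + 1) * (TH (n + 1) - TL (n + 1))) / nL := by
      field_simp at hL' ⊢
      nlinarith [hL']
    have e2 : TH (n + 1) - TH n = -(Δt * (2 * c (n + 1) * (TH (n + 1) - TL (n + 1)))) / nH := by
      field_simp at hH' ⊢
      nlinarith [hH']
    rw [hd]
    field_simp
    field_simp at e1 e2
    nlinarith [e1, e2, mul_pos hnL hnH]
  refine ⟨key, ?_⟩
  rw [key, abs_div, abs_of_pos hdpos]
  exact div_le_self (abs_nonneg _) hd1
end
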